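/- Let h be a p-to-e calibrator and P an (ε,δ)-approximate p-variable for P. Then E := h(P) is an (ε,δ)-approximate e-variable: for all t ≥ 0 and all P ∈ P, E^P[min(h(P), t)] ≤ 1 + ε_P + δ_P·t. -/

import Mathlib

/-!
For `g := min h t`, the layer cake formula writes `E[g(X)]` as `∫₀^∞ P(g(X) > u) du`. Since `h`
is decreasing, each superlevel set `{g > u}` is a lower set `S` of `ℝ`, and for lower sets the
approximate validity of `X` gives `P(X ∈ S) ≤ (1 + ε) λ(S ∩ (0,1)) + δ`; the `δ` term is only
paid for `u < t`, as `{g > u}` is empty beyond. Integrating in `u` and using the layer cake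
formula once more on `(0,1)` gives `(1 + ε) ∫₀¹ g + δ t ≤ 1 + ε + δ t`.
-/

open MeasureTheory
open scoped ENNReal

open Set Filter Topology

lemma volume_setOf_ofReal_lt_inter_Ioi (a : ℝ≥0∞) :
    volume ({u : ℝ | ENNReal.ofReal u < a} ∩ Ioi 0) = a := by
  rcases eq_or_ne a ∞ with rfl | ha
  · simp
  · have hIoo : {u : ℝ | ENNReal.ofReal u < a} ∩ Ioi 0 = Ioo 0 a.toReal := by
      ext u
      simp only [mem_inter_iff, mem_ofPred_eq, mem_Ioi, mem_Ioo]
      exact ⟨fun ⟨hua, hu⟩ => ⟨hu, (ENNReal.ofReal_lt_iff_lt_toReal hu.le ha).1 hua⟩,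
        fun ⟨hu, hua⟩ => ⟨(ENNReal.ofReal_lt_iff_lt_toReal hu.le ha).2 hua, hu⟩⟩
    rw [hIoo, Real.volume_Ioo, sub_zero, ENNReal.ofReal_toReal ha]

lemma lintegral_eq_lintegral_meas_ofReal_lt {α : Type*} [MeasurableSpace α] (μ : Measure α)
    [SFinite μ] {f : α → ℝ≥0∞} (hf : Measurable f) :
    ∫⁻ x, f x ∂μ = ∫⁻ u in Ioi 0, μ {x | ENNReal.ofReal u < f x} := by
  have hE : MeasurableSet {p : α × ℝ | ENNReal.ofReal p.2 < f p.1} :=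
    measurableSet_lt (ENNReal.measurable_ofReal.comp measurable_snd) (hf.comp measurable_fst)
  calc ∫⁻ x, f x ∂μ
      = ∫⁻ x, volume.restrict (Ioi 0) {u : ℝ | ENNReal.ofReal u < f x} ∂μ := by
        simp only [Measure.restrict_apply' measurableSet_Ioi, volume_setOf_ofReal_lt_inter_Ioi]
    _ = μ.prod (volume.restrict (Ioi 0)) {p | ENNReal.ofReal p.2 < f p.1} :=
        (Measure.prod_apply hE).symm
    _ = ∫⁻ u in Ioi 0, μ {x | ENNReal.ofReal u < f x} := Measure.prod_apply_symm hE

lemma IsLowerSet.ofReal_min_one_le_volume_inter_Ioo {S : Set ℝ} (hS : IsLowerSet S) {x : ℝ}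
    (hx : x ∈ S) : ENNReal.ofReal (min x 1) ≤ volume (S ∩ Ioo 0 1) :=
  calc ENNReal.ofReal (min x 1) = volume (Ioo 0 (min x 1)) := by rw [Real.volume_Ioo, sub_zero]
    _ ≤ volume (S ∩ Ioo 0 1) := measure_mono fun y hy =>
        ⟨hS (hy.2.le.trans (min_le_left _ _)) hx, hy.1, hy.2.trans_le (min_le_right _ _)⟩

def IsApproxPVariable {Ω : Type*} [MeasurableSpace Ω] (P : Measure Ω) (X : Ω → ℝ)
    (ε δ : ℝ) : Prop :=
  ∀ s : ℝ, 0 < s → s < 1 → P {ω | X ω ≤ s} ≤ ENNReal.ofReal ((1 + ε) * s + δ)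

namespace IsApproxPVariable

variable {Ω : Type*} [MeasurableSpace Ω] {P : Measure Ω} {X : Ω → ℝ} {ε δ : ℝ}

lemma measure_le_le (hP : IsApproxPVariable P X ε δ) {s : ℝ} (hs₀ : 0 ≤ s) (hs₁ : s < 1) :
    P {ω | X ω ≤ s} ≤ ENNReal.ofReal ((1 + ε) * s + δ) := by
  rcases hs₀.eq_or_lt with rfl | hs₀
  · have hlim : Tendsto (fun s : ℝ => ENNReal.ofReal ((1 + ε) * s + δ)) (𝓝[>] 0)
        (𝓝 (ENNReal.ofReal ((1 + ε) * 0 + δ))) :=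
      ((ENNReal.continuous_ofReal.comp (by fun_prop)).tendsto 0).mono_left nhdsWithin_le_nhds
    refine ge_of_tendsto hlim ?_
    filter_upwards [Ioo_mem_nhdsGT hs₁] with s hs
    exact (measure_mono fun ω (hω : X ω ≤ 0) => hω.trans hs.1.le).trans (hP s hs.1 hs.2)
  · exact hP s hs₀ hs₁

lemma measure_preimage_le_of_isLowerSet [IsProbabilityMeasure P]
    (hP : IsApproxPVariable P X ε δ) (hε : 0 ≤ ε) {S : Set ℝ} (hS : IsLowerSet S) :
    P (X ⁻¹' S) ≤ ENNReal.ofReal (1 + ε) * volume (S ∩ Ioo 0 1) + ENNReal.ofReal δ := by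
  set m := volume (S ∩ Ioo (0 : ℝ) 1)
  have hm : m ≤ 1 := (measure_mono inter_subset_right).trans_eq (by simp [Real.volume_Ioo])
  -- `(0, min x 1) ⊆ S` for `x ∈ S`, so if `a := λ(S ∩ (0,1)) < 1` then `S ⊆ (-∞, a]`.
  rcases hm.lt_or_eq with hlt | heq
  · set a := m.toReal
    have hma : m = ENNReal.ofReal a :=
      (ENNReal.ofReal_toReal (hlt.trans ENNReal.one_lt_top).ne).symm
    have ha₀ : 0 ≤ a := ENNReal.toReal_nonneg
    have ha₁ : a < 1 := ENNReal.toReal_lt_of_lt_ofReal (by rwa [ENNReal.ofReal_one])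
    have hsub : X ⁻¹' S ⊆ {ω | X ω ≤ a} := fun ω hω => by
      have hmin := hS.ofReal_min_one_le_volume_inter_Ioo hω
      change _ ≤ m at hmin
      rw [hma, ENNReal.ofReal_le_ofReal_iff ha₀] at hmin
      exact (min_le_iff.1 hmin).resolve_right (by linarith)
    calc P (X ⁻¹' S) ≤ P {ω | X ω ≤ a} := measure_mono hsub
      _ ≤ ENNReal.ofReal ((1 + ε) * a + δ) := hP.measure_le_le ha₀ ha₁
      _ ≤ ENNReal.ofReal ((1 + ε) * a) + ENNReal.ofReal δ := ENNReal.ofReal_add_le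
      _ = ENNReal.ofReal (1 + ε) * m + ENNReal.ofReal δ := by rw [ENNReal.ofReal_mul' ha₀, hma]
  · calc P (X ⁻¹' S) ≤ 1 := prob_le_one
      _ ≤ ENNReal.ofReal (1 + ε) * m := by
        rw [heq, mul_one, ENNReal.one_le_ofReal]
        linarith
      _ ≤ _ := le_self_add

lemma measure_ofReal_lt_comp_le [IsProbabilityMeasure P] (hP : IsApproxPVariable P X ε δ)
    (hε : 0 ≤ ε) {g : ℝ → ℝ≥0∞} (hg : Antitone g) {c : ℝ≥0∞} (hgc : ∀ x, g x ≤ c) (u : ℝ) :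
    P {ω | ENNReal.ofReal u < g (X ω)} ≤
      ENNReal.ofReal (1 + ε) * volume ({x | ENNReal.ofReal u < g x} ∩ Ioo 0 1) +
        {u : ℝ | ENNReal.ofReal u < c}.indicator (fun _ => ENNReal.ofReal δ) u := by
  by_cases hu : ENNReal.ofReal u < c
  · rw [indicator_of_mem (show u ∈ {u : ℝ | ENNReal.ofReal u < c} from hu)]
    exact hP.measure_preimage_le_of_isLowerSet hε fun a b hba ha => ha.trans_le (hg hba)
  · have hempty : {ω | ENNReal.ofReal u < g (X ω)} = ∅ :=
      eq_empty_of_forall_notMem fun ω hω => hu (hω.trans_le (hgc _))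
    simp [hempty]

lemma lintegral_antitone_comp_le [IsProbabilityMeasure P] (hP : IsApproxPVariable P X ε δ)
    (hε : 0 ≤ ε) (hX : Measurable X) {g : ℝ → ℝ≥0∞} (hg : Antitone g) {c : ℝ≥0∞}
    (hgc : ∀ x, g x ≤ c) :
    ∫⁻ ω, g (X ω) ∂P ≤
      ENNReal.ofReal (1 + ε) * (∫⁻ x in Ioo 0 1, g x) + ENNReal.ofReal δ * c := by
  have hlevel : MeasurableSet {u : ℝ | ENNReal.ofReal u < c} :=
    measurableSet_lt ENNReal.measurable_ofReal measurable_const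
  have hlayer : ∫⁻ x in Ioo 0 1, g x =
      ∫⁻ u in Ioi 0, volume ({x | ENNReal.ofReal u < g x} ∩ Ioo 0 1) := by
    simp only [lintegral_eq_lintegral_meas_ofReal_lt _ hg.measurable,
      Measure.restrict_apply' measurableSet_Ioo]
  calc ∫⁻ ω, g (X ω) ∂P
      = ∫⁻ u in Ioi 0, P {ω | ENNReal.ofReal u < g (X ω)} :=
        lintegral_eq_lintegral_meas_ofReal_lt P (hg.measurable.comp hX)
    _ ≤ ∫⁻ u in Ioi 0, (ENNReal.ofReal (1 + ε) *
          volume ({x | ENNReal.ofReal u < g x} ∩ Ioo 0 1) +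
            {u : ℝ | ENNReal.ofReal u < c}.indicator (fun _ => ENNReal.ofReal δ) u) :=
        lintegral_mono fun u => hP.measure_ofReal_lt_comp_le hε hg hgc u
    _ = ENNReal.ofReal (1 + ε) * (∫⁻ x in Ioo 0 1, g x) + ENNReal.ofReal δ * c := by
        rw [lintegral_add_right _ (measurable_const.indicator hlevel),
          lintegral_const_mul' _ _ ENNReal.ofReal_ne_top, lintegral_indicator_const hlevel,
          Measure.restrict_apply' measurableSet_Ioi, volume_setOf_ofReal_lt_inter_Ioi, ← hlayer]

end IsApproxPVariable

theorem calibrate_approx_p_to_approx_e_general {Ω : Type*} [MeasurableSpace Ω]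
    (Unv : Set (Measure Ω)) (hprob : ∀ P ∈ Unv, IsProbabilityMeasure P)
    (ε δ : Measure Ω → ℝ)
    (hε : ∀ P ∈ Unv, 0 ≤ ε P)
    (h : ℝ → ℝ≥0∞) (hanti : Antitone h)
    (hint : ∫⁻ x in Set.Ioo (0:ℝ) 1, h x ≤ 1)
    (X : Ω → ℝ) (hX : Measurable X)
    (happrox : ∀ P ∈ Unv, ∀ s : ℝ, 0 < s → s < 1 →
      P {ω | X ω ≤ s} ≤ ENNReal.ofReal ((1 + ε P) * s + δ P)) :
    ∀ P ∈ Unv, ∀ t : ℝ, 0 ≤ t →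
      ∫⁻ ω, min (h (X ω)) (ENNReal.ofReal t) ∂P ≤
        1 + ENNReal.ofReal (ε P) + ENNReal.ofReal (δ P) * ENNReal.ofReal t := by
  intro P hP t _
  have := hprob P hP
  have hcal : Antitone fun x => min (h x) (ENNReal.ofReal t) :=
    fun a b hab => min_le_min_right _ (hanti hab)
  calc ∫⁻ ω, min (h (X ω)) (ENNReal.ofReal t) ∂P
      ≤ ENNReal.ofReal (1 + ε P) * (∫⁻ x in Ioo 0 1, min (h x) (ENNReal.ofReal t)) +
          ENNReal.ofReal (δ P) * ENNReal.ofReal t :=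
        IsApproxPVariable.lintegral_antitone_comp_le (happrox P hP) (hε P hP) hX hcal
          fun _ => min_le_right _ _
    _ ≤ ENNReal.ofReal (1 + ε P) * 1 + ENNReal.ofReal (δ P) * ENNReal.ofReal t := by
        gcongr
        exact (lintegral_mono fun x => min_le_left _ _).trans hint
    _ ≤ 1 + ENNReal.ofReal (ε P) + ENNReal.ofReal (δ P) * ENNReal.ofReal t := by
        rw [mul_one, ← ENNReal.ofReal_one]
        exact add_le_add_left ENNReal.ofReal_add_le _

/-- Calibrating an `(ε,δ)`-approximate p-variable with a p-to-e calibrator `h` yields an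
`(ε,δ)`-approximate e-variable: `E^P[min(h(X), t)] ≤ 1 + ε_P + δ_P·t` for all `t ≥ 0`. -/
theorem calibrate_approx_p_to_approx_e {Ω : Type*} [MeasurableSpace Ω]
    (Unv : Set (Measure Ω)) (hprob : ∀ P ∈ Unv, IsProbabilityMeasure P)
    (ε δ : Measure Ω → ℝ)
    (hε : ∀ P ∈ Unv, 0 ≤ ε P) (hδ : ∀ P ∈ Unv, 0 ≤ δ P ∧ δ P ≤ 1)
    (h : ℝ → ℝ≥0∞) (hanti : Antitone h)
    (hint : ∫⁻ x in Set.Ioo (0:ℝ) 1, h x ≤ 1)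
    (hzero : ∀ x : ℝ, 1 < x → h x = 0)
    (X : Ω → ℝ) (hX : Measurable X) (hXnn : ∀ ω, 0 ≤ X ω)
    (happrox : ∀ P ∈ Unv, ∀ s : ℝ, 0 < s → s < 1 →
      P {ω | X ω ≤ s} ≤ ENNReal.ofReal ((1 + ε P) * s + δ P)) :
    ∀ P ∈ Unv, ∀ t : ℝ, 0 ≤ t →
      ∫⁻ ω, min (h (X ω)) (ENNReal.ofReal t) ∂P ≤
        1 + ENNReal.ofReal (ε P) + ENNReal.ofReal (δ P) * ENNReal.ofReal t :=
  calibrate_approx_p_to_approx_e_general Unv hprob ε δ hε h hanti hint X hX happrox
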